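/- Fix τ₁ ≥ 0 and σ_s > 0. Then the function u(σ̃) = (σ_s²/σ̃)·H(τ₁/σ̃) is strictly decreasing in σ̃ on (0, ∞); i.e., the expected quality of an applicant selected by the agent at threshold τ₁ decays monotonically in the noise level of the signal s̃. -/

import Mathlib

open MeasureTheory ProbabilityTheory Real

/-- Standard normal density. -/
noncomputable def stdPdf (x : ℝ) : ℝ := (Real.sqrt (2 * Real.pi))⁻¹ * Real.exp (-(x ^ 2) / 2)

/-- Standard normal CDF. -/
noncomputable def stdCdf (x : ℝ) : ℝ := ∫ u in Set.Iic x, stdPdf u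

/-- Standard normal complementary CDF. -/
noncomputable def stdCcdf (x : ℝ) : ℝ := 1 - stdCdf x

/-- Standard normal hazard rate. -/
noncomputable def hazard (x : ℝ) : ℝ := stdPdf x / stdCcdf x

/-!
The standard normal hazard rate `H = φ / Φᶜ` is nondecreasing: `H' = H (H - x)`, and `H(x) ≥ x`
by Mills' inequality. For `τ₁ ≥ 0` the argument `τ₁ / σ̃` decreases with `σ̃`, so `H(τ₁ / σ̃)` is a
positive nonincreasing factor, and multiplying it by the strictly decreasing `σ_s² / σ̃` gives
strict decrease.
-/

lemma stdPdf_eq_gaussianPDFReal : stdPdf = gaussianPDFReal 0 1 := by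
  ext x
  simp [stdPdf, gaussianPDFReal]

lemma stdPdf_pos (x : ℝ) : 0 < stdPdf x := by
  rw [stdPdf_eq_gaussianPDFReal]
  exact gaussianPDFReal_pos 0 1 x one_ne_zero

lemma continuous_stdPdf : Continuous stdPdf := by
  unfold stdPdf
  fun_prop

lemma integrable_stdPdf : Integrable stdPdf := by
  rw [stdPdf_eq_gaussianPDFReal]
  exact integrable_gaussianPDFReal 0 1

lemma integral_stdPdf : ∫ x, stdPdf x = 1 := by
  rw [stdPdf_eq_gaussianPDFReal]
  exact integral_gaussianPDFReal_eq_one 0 one_ne_zero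

lemma hasDerivAt_stdPdf (x : ℝ) : HasDerivAt stdPdf (-x * stdPdf x) x := by
  have h : HasDerivAt (fun y : ℝ => -(y ^ 2) / 2) (-x) x :=
    ((hasDerivAt_pow 2 x).neg.div_const 2).congr_deriv (by ring)
  refine (h.exp.const_mul (√(2 * π))⁻¹).congr_deriv ?_
  rw [stdPdf]
  ring

lemma tendsto_stdPdf_atTop : Filter.Tendsto stdPdf Filter.atTop (nhds 0) := by
  have hsq : Filter.Tendsto (fun y : ℝ => y ^ 2 / 2) Filter.atTop Filter.atTop :=
    (Filter.tendsto_pow_atTop two_ne_zero).atTop_div_const two_pos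
  have h := (tendsto_exp_neg_atTop_nhds_zero.comp hsq).const_mul (√(2 * π))⁻¹
  rw [mul_zero] at h
  exact h.congr fun y => by simp [stdPdf, neg_div]

lemma integrable_mul_stdPdf : Integrable fun t => t * stdPdf t := by
  refine ((integrable_mul_exp_neg_mul_sq one_half_pos).const_mul (√(2 * π))⁻¹).congr ?_
  filter_upwards with t
  rw [stdPdf]
  ring_nf

lemma integral_Ioi_mul_stdPdf (x : ℝ) : ∫ t in Set.Ioi x, t * stdPdf t = stdPdf x := by
  have h := integral_Ioi_of_hasDerivAt_of_tendsto' (a := x)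
    (fun t _ => (hasDerivAt_stdPdf t).neg.congr_deriv (by ring)) integrable_mul_stdPdf.integrableOn
    tendsto_stdPdf_atTop.neg
  simpa using h

lemma stdCcdf_eq_integral_Ioi (x : ℝ) : stdCcdf x = ∫ t in Set.Ioi x, stdPdf t := by
  rw [stdCcdf, stdCdf, ← integral_stdPdf,
    ← intervalIntegral.integral_Iic_add_Ioi integrable_stdPdf.integrableOn
      integrable_stdPdf.integrableOn]
  ring

lemma stdCcdf_pos (x : ℝ) : 0 < stdCcdf x := by
  rw [stdCcdf_eq_integral_Ioi]
  refine (setIntegral_pos_iff_support_of_nonneg_ae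
    (.of_forall fun t => (stdPdf_pos t).le) integrable_stdPdf.integrableOn).2 ?_
  simp [Function.support_eq_univ fun t => (stdPdf_pos t).ne']

lemma hazard_pos (x : ℝ) : 0 < hazard x :=
  div_pos (stdPdf_pos x) (stdCcdf_pos x)

lemma hasDerivAt_stdCcdf (x : ℝ) : HasDerivAt stdCcdf (-stdPdf x) x := by
  have hcdf : ∀ y, stdCdf y = stdCdf 0 + ∫ t in (0 : ℝ)..y, stdPdf t := fun y => by
    rw [← intervalIntegral.integral_Iic_sub_Iic integrable_stdPdf.integrableOn
      integrable_stdPdf.integrableOn, stdCdf, stdCdf]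
    ring
  have h := continuous_stdPdf.integral_hasStrictDerivAt 0 x |>.hasDerivAt
  exact ((h.const_add (stdCdf 0)).congr_of_eventuallyEq
    (.of_forall hcdf)).const_sub 1

-- Mills' inequality: `x ∫_{t > x} φ(t) dt ≤ ∫_{t > x} t φ(t) dt = φ(x)`.
lemma mul_stdCcdf_le_stdPdf (x : ℝ) : x * stdCcdf x ≤ stdPdf x := by
  rw [stdCcdf_eq_integral_Ioi, ← integral_Ioi_mul_stdPdf x, ← integral_const_mul]
  refine setIntegral_mono_on (integrable_stdPdf.integrableOn.const_mul x)
    integrable_mul_stdPdf.integrableOn measurableSet_Ioi fun t ht => ?_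
  exact mul_le_mul_of_nonneg_right ht.le (stdPdf_pos t).le

lemma le_hazard (x : ℝ) : x ≤ hazard x :=
  (le_div_iff₀ (stdCcdf_pos x)).2 (mul_stdCcdf_le_stdPdf x)

lemma hasDerivAt_hazard (x : ℝ) : HasDerivAt hazard (hazard x * (hazard x - x)) x := by
  refine ((hasDerivAt_stdPdf x).div (hasDerivAt_stdCcdf x) (stdCcdf_pos x).ne').congr_deriv ?_
  have hccdf := (stdCcdf_pos x).ne'
  rw [hazard]
  field_simp
  ring

lemma monotone_hazard : Monotone hazard :=
  monotone_of_hasDerivAt_nonneg hasDerivAt_hazard fun x =>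
    mul_nonneg (hazard_pos x).le (sub_nonneg.2 (le_hazard x))

/-- The expected quality `(σ_s²/σ̃)·H(τ₁/σ̃)` of an applicant selected by the agent at
threshold `τ₁ ≥ 0` is strictly decreasing in the noise level `σ̃` of the observed signal. -/
theorem expected_quality_strictAnti_in_noise (τ₁ σs : ℝ) (hτ : 0 ≤ τ₁) (hσs : 0 < σs) :
    StrictAntiOn (fun σtl : ℝ => σs ^ 2 / σtl * hazard (τ₁ / σtl))
      (Set.Ioi (0 : ℝ)) := by
  intro a ha b _ hab
  have ha : 0 < a := ha
  have hscale : σs ^ 2 / b < σs ^ 2 / a := div_lt_div_of_pos_left (by positivity) ha hab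
  have hhaz : hazard (τ₁ / b) ≤ hazard (τ₁ / a) :=
    monotone_hazard (div_le_div_of_nonneg_left hτ ha hab.le)
  exact mul_lt_mul hscale hhaz (hazard_pos _) (by positivity)
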